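/- Let F be a field of characteristic 0. The common zero set in F² of the four polynomials a⁴−a²b, a³b−ab², ab³+a²b, b⁴+ab² is exactly {(0,0), (−1,1), (α,α²), (α⁻¹,α⁻²)} where α ranges over the roots of x²−x+1; in particular if F is algebraically closed the set has exactly 4 elements. -/

import Mathlib

/-!
Every common zero `(a, b)` with `a ≠ 0` has `b = a²` (from the first polynomial), and then the
third one reduces to `a⁴ (a³ + 1)`; the cube roots of `-1` are `-1` and the two roots `α`,
`α⁻¹ = 1 - α` of `x² - x + 1`. These are pairwise distinct as soon as `3 ≠ 0`.
-/

theorem quartic_system_eq_zero_iff {R : Type*} [CommRing R] [IsDomain R] (a b : R) :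
    (a ^ 4 - a ^ 2 * b = 0 ∧ a ^ 3 * b - a * b ^ 2 = 0 ∧
      a * b ^ 3 + a ^ 2 * b = 0 ∧ b ^ 4 + a * b ^ 2 = 0) ↔
    (a = 0 ∧ b = 0) ∨ (a ^ 3 = -1 ∧ b = a ^ 2) := by
  constructor
  · rintro ⟨h1, -, h3, h4⟩
    by_cases ha : a = 0
    · subst ha
      exact .inl ⟨rfl, pow_eq_zero_iff four_ne_zero |>.mp (by linear_combination h4)⟩
    · have hb : b = a ^ 2 := by
        have : a ^ 2 * (a ^ 2 - b) = 0 := by linear_combination h1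
        exact (sub_eq_zero.mp ((mul_eq_zero.mp this).resolve_left (pow_ne_zero 2 ha))).symm
      subst hb
      have : a ^ 4 * (a ^ 3 + 1) = 0 := by linear_combination h3
      exact .inr ⟨eq_neg_of_add_eq_zero_left
        ((mul_eq_zero.mp this).resolve_left (pow_ne_zero 4 ha)), rfl⟩
  · rintro (⟨rfl, rfl⟩ | ⟨ha, rfl⟩)
    · norm_num
    · refine ⟨by ring, by ring, ?_, ?_⟩
      · linear_combination a ^ 4 * ha
      · linear_combination a ^ 5 * ha

section RootOfSqSubAddOne

variable {F : Type*} [Field F] {α : F} (hα : α ^ 2 - α + 1 = 0)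
include hα

theorem ne_zero_of_sq_sub_add_one_eq_zero : α ≠ 0 := by
  rintro rfl
  norm_num at hα

theorem inv_eq_one_sub_of_sq_sub_add_one_eq_zero : α⁻¹ = 1 - α := by
  rw [inv_eq_of_mul_eq_one_right]
  linear_combination -hα

theorem cube_eq_neg_one_iff (a : F) : a ^ 3 = -1 ↔ a = -1 ∨ a = α ∨ a = α⁻¹ := by
  have hfactor : a ^ 3 + 1 = (a + 1) * ((a - α) * (a - α⁻¹)) := by
    rw [inv_eq_one_sub_of_sq_sub_add_one_eq_zero hα]
    linear_combination (a + 1) * hα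
  rw [← add_eq_zero_iff_eq_neg, hfactor]
  simp only [mul_eq_zero, add_eq_zero_iff_eq_neg, sub_eq_zero]

theorem ncard_points_of_sq_sub_add_one_eq_zero (h3 : (3 : F) ≠ 0) :
    ({(0, 0), (-1, 1), (α, α ^ 2), (α⁻¹, (α⁻¹) ^ 2)} : Set (F × F)).ncard = 4 := by
  have hinv := inv_eq_one_sub_of_sq_sub_add_one_eq_zero hα
  have hα0 := ne_zero_of_sq_sub_add_one_eq_zero hα
  have h1α : (-1 : F) ≠ α := by
    rintro rfl; exact h3 (by linear_combination hα)
  have h1α' : (-1 : F) ≠ α⁻¹ := by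
    rw [hinv]; intro h; exact h3 (by linear_combination hα - (α + 1) * h)
  have hαα' : α ≠ α⁻¹ := by
    rw [hinv]; intro h; exact h3 (by linear_combination 4 * hα - (2 * α - 1) * h)
  refine Set.ncard_eq_four.mpr ⟨_, _, _, _, ?_, ?_, ?_, ?_, ?_, ?_, rfl⟩ <;>
    refine fun h => ?_ <;> have h := congrArg Prod.fst h
  exacts [(neg_ne_zero.mpr one_ne_zero) h.symm, hα0 h.symm, inv_ne_zero hα0 h.symm,
    h1α h, h1α' h, hαα' h]

end RootOfSqSubAddOne

theorem rank2_case3_zero_set_general (F : Type*) [Field F] [CharZero F]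
    (α : F) (hα : α ^ 2 - α + 1 = 0) :
    {p : F × F |
      p.1 ^ 4 - p.1 ^ 2 * p.2 = 0 ∧
      p.1 ^ 3 * p.2 - p.1 * p.2 ^ 2 = 0 ∧
      p.1 * p.2 ^ 3 + p.1 ^ 2 * p.2 = 0 ∧
      p.2 ^ 4 + p.1 * p.2 ^ 2 = 0} =
    {(0, 0), (-1, 1), (α, α ^ 2), (α⁻¹, (α⁻¹) ^ 2)} ∧
    ({(0, 0), (-1, 1), (α, α ^ 2), (α⁻¹, (α⁻¹) ^ 2)} : Set (F × F)).ncard = 4 := by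
  refine ⟨?_, ncard_points_of_sq_sub_add_one_eq_zero hα three_ne_zero⟩
  ext ⟨a, b⟩
  simp only [Set.mem_ofPred_eq, quartic_system_eq_zero_iff, cube_eq_neg_one_iff hα,
    Set.mem_insert_iff, Set.mem_singleton_iff, Prod.mk.injEq]
  constructor
  · rintro (⟨rfl, rfl⟩ | ⟨rfl | rfl | rfl, rfl⟩) <;> simp
  · rintro (⟨rfl, rfl⟩ | ⟨rfl, rfl⟩ | ⟨rfl, rfl⟩ | ⟨rfl, rfl⟩) <;> simp

/-- Rank 2, case 3: the common zero set of the four polynomials is exactly four points. -/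
theorem rank2_case3_zero_set (F : Type*) [Field F] [IsAlgClosed F] [CharZero F]
    (α : F) (hα : α ^ 2 - α + 1 = 0) :
    {p : F × F |
      p.1 ^ 4 - p.1 ^ 2 * p.2 = 0 ∧
      p.1 ^ 3 * p.2 - p.1 * p.2 ^ 2 = 0 ∧
      p.1 * p.2 ^ 3 + p.1 ^ 2 * p.2 = 0 ∧
      p.2 ^ 4 + p.1 * p.2 ^ 2 = 0} =
    {(0, 0), (-1, 1), (α, α ^ 2), (α⁻¹, (α⁻¹) ^ 2)} ∧
    ({(0, 0), (-1, 1), (α, α ^ 2), (α⁻¹, (α⁻¹) ^ 2)} : Set (F × F)).ncard = 4 :=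
  rank2_case3_zero_set_general F α hα
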